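/- The map Y(u,v,w) = (1/√3)·(u(1+2w²), v(1+2w²), 2uv√(2+w²), (u²−v²)√(2+w²), √3·w³) restricted to the unit sphere u²+v²+w² = 1 takes values in the unit sphere S⁴ ⊂ ℝ⁵, i.e. |Y(u,v,w)|² = 1 whenever u²+v²+w² = 1. -/

import Mathlib

/-- The algebraic parametrization `Y` of the surface `𝒱₁`. -/
noncomputable def Ymap (u v w : ℝ) : Fin 5 → ℝ :=
  fun i =>
    (Real.sqrt 3)⁻¹ *
      ![u * (1 + 2 * w ^ 2),
        v * (1 + 2 * w ^ 2),
        2 * u * v * Real.sqrt (2 + w ^ 2),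
        (u ^ 2 - v ^ 2) * Real.sqrt (2 + w ^ 2),
        Real.sqrt 3 * w ^ 3] i

theorem stmt_17 (u v w : ℝ) (h : u ^ 2 + v ^ 2 + w ^ 2 = 1) :
    (Ymap u v w 0) ^ 2 + (Ymap u v w 1) ^ 2 + (Ymap u v w 2) ^ 2 +
      (Ymap u v w 3) ^ 2 + (Ymap u v w 4) ^ 2 = 1 := by
  have h3 : Real.sqrt 3 ^ 2 = 3 := Real.sq_sqrt (by norm_num)
  have h2 : Real.sqrt (2 + w ^ 2) ^ 2 = 2 + w ^ 2 :=
    Real.sq_sqrt (by positivity)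
  have h3pos : Real.sqrt 3 > 0 := Real.sqrt_pos.mpr (by norm_num)
  simp only [Ymap, Matrix.cons_val_zero, Matrix.cons_val_one, Matrix.head_cons,
    Matrix.cons_val_fin_one, Matrix.cons_val', Matrix.cons_val_succ, Matrix.cons_val_two, Matrix.cons_val_three,
    Matrix.cons_val_four, Matrix.tail_cons]
  field_simp
  rw [h3]
  linear_combination ((2*u*v)^2 + (u^2-v^2)^2) * h2 +
    ((1+2*w^2)^2 + (2+w^2)*(u^2+v^2+1-w^2)) * h
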